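/- Perceptron convergence theorem: if there exist w* with ‖w*‖ = 1 and γ > 0 such that y_i · (w*ᵀ x_i) ≥ γ for all training samples, and ‖x_i‖ ≤ R for all i, then the perceptron algorithm (starting from w = 0, updating w ← w + y_i x_i whenever sample i is misclassified, i.e., y_i (wᵀ x_i) ≤ 0) makes at most (R/γ)² mistakes. -/
import Mathlib


open scoped RealInnerProductSpace

/-- Perceptron convergence theorem: if the data is linearly separable through
the origin with margin `γ > 0` by a unit vector `w*`, and `‖x_i‖ ≤ R`, then any
run of the perceptron algorithm (start `w = 0`, update `w ← w + y_i x_i` on a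
misclassified sample, i.e. one with `y_i⟪w, x_i⟫ ≤ 0`) makes at most `(R/γ)²`
mistakes. -/
theorem stmt_11 {d N : ℕ}
    (x : Fin N → EuclideanSpace ℝ (Fin d)) (y : Fin N → ℝ)
    (hy : ∀ i, y i = 1 ∨ y i = -1)
    (wstar : EuclideanSpace ℝ (Fin d)) (hwstar : ‖wstar‖ = 1)
    (γ : ℝ) (hγ : 0 < γ)
    (hmargin : ∀ i, γ ≤ y i * ⟪wstar, x i⟫)
    (R : ℝ) (hR : ∀ i, ‖x i‖ ≤ R)
    (M : ℕ) (w : ℕ → EuclideanSpace ℝ (Fin d)) (hw0 : w 0 = 0)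
    (idx : ℕ → Fin N)
    (hmis : ∀ m < M, y (idx m) * ⟪w m, x (idx m)⟫ ≤ 0)
    (hupd : ∀ m < M, w (m + 1) = w m + y (idx m) • x (idx m)) :
    (M : ℝ) ≤ (R / γ) ^ 2 := by
  rcases Nat.eq_zero_or_pos M with hM | hM
  · simp [hM]
    positivity
  have hR0 : 0 ≤ R := le_trans (norm_nonneg _) (hR (idx 0))
  have hy2 : ∀ i, (y i) ^ 2 = 1 := by
    intro i; rcases hy i with h | h <;> simp [h]
  -- lower bound on inner product
  have hlow : ∀ m ≤ M, γ * m ≤ ⟪wstar, w m⟫ := by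
    intro m hm
    induction m with
    | zero => simp [hw0]
    | succ n ih =>
      have hn : n < M := hm
      have ihn := ih (le_of_lt hn)
      rw [hupd n hn]
      have : ⟪wstar, w n + y (idx n) • x (idx n)⟫
          = ⟪wstar, w n⟫ + y (idx n) * ⟪wstar, x (idx n)⟫ := by
        rw [inner_add_right, real_inner_smul_right]
      rw [this]
      have := hmargin (idx n)
      push_cast
      nlinarith
  -- upper bound on norm squared
  have hup : ∀ m ≤ M, ‖w m‖ ^ 2 ≤ m * R ^ 2 := by
    intro m hm
    induction m with
    | zero => simp [hw0]
    | succ n ih =>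
      have hn : n < M := hm
      have ihn := ih (le_of_lt hn)
      rw [hupd n hn]
      have hexp : ‖w n + y (idx n) • x (idx n)‖ ^ 2
          = ‖w n‖ ^ 2 + 2 * (y (idx n) * ⟪w n, x (idx n)⟫)
            + (y (idx n)) ^ 2 * ‖x (idx n)‖ ^ 2 := by
        simp only [← real_inner_self_eq_norm_sq, inner_add_add_self,
          real_inner_smul_left, real_inner_smul_right,
          real_inner_comm (x (idx n)) (w n)]
        ring
      rw [hexp, hy2]
      have h1 := hmis n hn
      have h2 := hR (idx n)
      have h3 : ‖x (idx n)‖ ^ 2 ≤ R ^ 2 := by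
        nlinarith [norm_nonneg (x (idx n))]
      push_cast
      nlinarith
  have h1 := hlow M le_rfl
  have h2 := hup M le_rfl
  have hcs : ⟪wstar, w M⟫ ≤ ‖w M‖ := by
    calc ⟪wstar, w M⟫ ≤ ‖wstar‖ * ‖w M‖ := real_inner_le_norm _ _
    _ = ‖w M‖ := by rw [hwstar, one_mul]
  have hM1 : (1 : ℝ) ≤ M := by exact_mod_cast hM
  have h4 : γ * M ≤ ‖w M‖ := h1.trans hcs
  have h5 : (0:ℝ) ≤ γ * M := by positivity
  have h6 := mul_self_le_mul_self h5 h4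
  have key : γ ^ 2 * (M : ℝ) ^ 2 ≤ (M : ℝ) * R ^ 2 := by
    nlinarith [h6]
  rw [div_pow, le_div_iff₀ (by positivity)]
  nlinarith
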